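/- arXiv:2106.13402 — 4 statements merged into one kernel-verified Lean document; each statement's English description precedes it below -/
import Mathlib

section
/- Let A be a real m×n matrix and q a non-negative integer, and let G be a real n×n matrix. Let ℓ be a positive integer with ℓ ≤ min(n, rank(A)). Suppose: (i) (AᵀA)^q G = V S where V is an n×n orthogonal matrix and S is n×n upper triangular; (ii) A V = U R where U is an m×m orthogonal matrix and R is m×n upper trapezoidal (R(i,j)=0 for i>j); (iii) Y := (AAᵀ)^q A G(:,1:ℓ) satisfies Y = Q R' where Q is m×ℓ with orthonormal columns and R' is ℓ×ℓ upper triangular and invertible; (iv) Qᵀ A = W Σ Nᵀ where W is an ℓ×ℓ orthogonal matrix, Σ is ℓ×ℓ diagonal, and N is n×ℓ with orthonormal columns; (v) the leading ℓ×ℓ blocks R(1:ℓ,1:ℓ) and S(1:ℓ,1:ℓ) are invertible. Define U₁ := U(:,1:ℓ) (the first ℓ columns of U) and U_rsvd := Q W. Then U₁ U₁ᵀ A = U_rsvd U_rsvdᵀ A. -/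
open Matrix

/-- Equivalence of the powerURV factorization and the RSVD: under the stated
deterministic hypotheses on the factorizations, the orthogonal projector onto the
first ℓ columns of the powerURV factor U, applied to A, agrees with the projector
built from the RSVD factor U_rsvd = Q·W applied to A. -/
theorem powerURV_eq_rsvd_projection
    {m n : ℕ} (A : Matrix (Fin m) (Fin n) ℝ) (q : ℕ)
    (G : Matrix (Fin n) (Fin n) ℝ) (ℓ : ℕ) (hℓ0 : 0 < ℓ)
    (hℓn : ℓ ≤ n) (hℓr : ℓ ≤ A.rank)
    -- (i) powerURV step 1: (AᵀA)^q G = V S , V orthogonal, S upper triangular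
    (V S : Matrix (Fin n) (Fin n) ℝ)
    (hV : Vᵀ * V = 1)
    (hS : ∀ i j : Fin n, (j : ℕ) < (i : ℕ) → S i j = 0)
    (h1 : (Aᵀ * A) ^ q * G = V * S)
    -- (ii) powerURV step 2: A V = U R , U orthogonal, R upper trapezoidal
    (U : Matrix (Fin m) (Fin m) ℝ) (R : Matrix (Fin m) (Fin n) ℝ)
    (hU : Uᵀ * U = 1)
    (hR : ∀ (i : Fin m) (j : Fin n), (j : ℕ) < (i : ℕ) → R i j = 0)
    (h2 : A * V = U * R)
    -- (iii) RSVD step 1: Y = (AAᵀ)^q A G(:,1:ℓ) = Q R' , Q orthonormal columns,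
    -- R' upper triangular and invertible
    (Q : Matrix (Fin m) (Fin ℓ) ℝ) (R' : Matrix (Fin ℓ) (Fin ℓ) ℝ)
    (hQ : Qᵀ * Q = 1)
    (hR' : ∀ i j : Fin ℓ, (j : ℕ) < (i : ℕ) → R' i j = 0) (hR'u : IsUnit R')
    (h3 : (A * Aᵀ) ^ q * A * G.submatrix id (Fin.castLE hℓn) = Q * R')
    -- (iv) RSVD step 2: Qᵀ A = W Σ Nᵀ , W orthogonal, Σ diagonal, N orthonormal columns
    (W Sig : Matrix (Fin ℓ) (Fin ℓ) ℝ) (N : Matrix (Fin n) (Fin ℓ) ℝ)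
    (hW : Wᵀ * W = 1) (hSig : Sig.IsDiag) (hN : Nᵀ * N = 1)
    (h4 : Qᵀ * A = W * Sig * Nᵀ)
    -- (v) leading ℓ×ℓ blocks of R and S are invertible
    (hRl : IsUnit (R.submatrix
      (Fin.castLE (show ℓ ≤ m by
        exact hℓr.trans ((A.rank_le_card_height).trans (Fintype.card_fin m).le)))
      (Fin.castLE hℓn)))
    (hSl : IsUnit (S.submatrix (Fin.castLE hℓn) (Fin.castLE hℓn))) :
    -- conclusion: U(:,1:ℓ) U(:,1:ℓ)ᵀ A = (QW)(QW)ᵀ A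
    (U.submatrix id (Fin.castLE (show ℓ ≤ m by
        exact hℓr.trans ((A.rank_le_card_height).trans (Fintype.card_fin m).le))))
      * (U.submatrix id (Fin.castLE (show ℓ ≤ m by
        exact hℓr.trans ((A.rank_le_card_height).trans (Fintype.card_fin m).le))))ᵀ
      * A
      = (Q * W) * (Q * W)ᵀ * A := by

  have e : ℓ ≤ m := hℓr.trans ((A.rank_le_card_height).trans (Fintype.card_fin m).le)
  set U₁ : Matrix (Fin m) (Fin ℓ) ℝ := U.submatrix id (Fin.castLE e) with hU₁
  -- U₁ has orthonormal columns
  have hU₁o : U₁ᵀ * U₁ = 1 := by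
    have h : U₁ᵀ * U₁ = (Uᵀ * U).submatrix (Fin.castLE e) (Fin.castLE e) := by
      ext i j
      simp [hU₁, Matrix.mul_apply]
    rw [h, hU]
    ext i j
    simp [Matrix.one_apply, Fin.castLE_inj]
  -- power commutation
  have hcomm : ∀ k : ℕ, (A * Aᵀ) ^ k * A = A * (Aᵀ * A) ^ k := by
    intro k
    induction k with
    | zero => simp
    | succ k ih =>
      calc (A * Aᵀ) ^ (k + 1) * A = (A * Aᵀ) ^ k * A * (Aᵀ * A) := by
            rw [pow_succ]; simp only [Matrix.mul_assoc]
        _ = A * (Aᵀ * A) ^ k * (Aᵀ * A) := by rw [ih]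
        _ = A * (Aᵀ * A) ^ (k + 1) := by rw [pow_succ, Matrix.mul_assoc]
  set P : Matrix (Fin m) (Fin n) ℝ := R * S with hP
  have hPz : ∀ (i : Fin m) (j : Fin n), (j : ℕ) < (i : ℕ) → P i j = 0 := by
    intro i j hij
    simp only [hP, Matrix.mul_apply]
    apply Finset.sum_eq_zero
    intro k _
    rcases lt_or_ge (k : ℕ) (i : ℕ) with h | h
    · rw [hR i k h, zero_mul]
    · rw [hS k j (hij.trans_le h), mul_zero]
  -- column-submatrix commutes with left multiplication
  have colsub : ∀ {α : Type} [Fintype α] (X : Matrix (Fin m) α ℝ)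
      (Y : Matrix α (Fin n) ℝ),
      X * Y.submatrix id (Fin.castLE hℓn) = (X * Y).submatrix id (Fin.castLE hℓn) := by
    intro α _ X Y
    ext i j
    simp [Matrix.mul_apply]
  have hQR : Q * R' = U * (P.submatrix id (Fin.castLE hℓn)) := by
    rw [← h3, colsub, colsub]
    congr 1
    rw [hcomm q, Matrix.mul_assoc, h1, ← Matrix.mul_assoc, h2, Matrix.mul_assoc, ← hP]
  -- the trapezoidal structure lets us restrict U to its first ℓ columns
  have hstep : U * P.submatrix id (Fin.castLE hℓn)
      = U₁ * P.submatrix (Fin.castLE e) (Fin.castLE hℓn) := by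
    ext i j
    simp only [Matrix.mul_apply, Matrix.submatrix_apply, hU₁, id]
    have hmap : ∑ k : Fin ℓ, U i (Fin.castLE e k) * P (Fin.castLE e k) (Fin.castLE hℓn j)
        = ∑ k ∈ Finset.univ.map (Fin.castLEEmb e),
            U i k * P k (Fin.castLE hℓn j) := by
      rw [Finset.sum_map]
      rfl
    rw [hmap]
    refine (Finset.sum_subset (Finset.subset_univ _) ?_).symm
    intro x _ hx
    have hxℓ : ¬ (x : ℕ) < ℓ := by
      intro hlt
      exact hx (Finset.mem_map.mpr ⟨⟨(x : ℕ), hlt⟩, Finset.mem_univ _, by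
        ext; simp⟩)
    have : ((Fin.castLE hℓn j : Fin n) : ℕ) < (x : ℕ) :=
      lt_of_lt_of_le (by simpa using j.isLt) (le_of_not_gt hxℓ)
    rw [hPz x _ this, mul_zero]
  have hdet : IsUnit R'.det := (Matrix.isUnit_iff_isUnit_det R').mp hR'u
  have hRinv : R' * R'⁻¹ = 1 := Matrix.mul_nonsing_inv R' hdet
  set K : Matrix (Fin ℓ) (Fin ℓ) ℝ :=
    P.submatrix (Fin.castLE e) (Fin.castLE hℓn) * R'⁻¹ with hK
  have hQK : Q = U₁ * K := by
    have h : Q * (R' * R'⁻¹) = U₁ * K := by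
      rw [← Matrix.mul_assoc, hQR, hstep, hK, Matrix.mul_assoc]
    rwa [hRinv, Matrix.mul_one] at h
  have hKo : Kᵀ * K = 1 := by
    have h := hQ
    rw [hQK, Matrix.transpose_mul] at h
    rwa [Matrix.mul_assoc, ← Matrix.mul_assoc U₁ᵀ, hU₁o, Matrix.one_mul] at h
  have hKK : K * Kᵀ = 1 := mul_eq_one_comm.mp hKo
  have hWW : W * Wᵀ = 1 := mul_eq_one_comm.mp hW
  have hQQ : Q * Qᵀ = U₁ * U₁ᵀ := by
    rw [hQK, Matrix.transpose_mul, ← Matrix.mul_assoc, Matrix.mul_assoc U₁ K Kᵀ, hKK, Matrix.mul_one]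
  have final : U₁ * U₁ᵀ * A = (Q * W) * (Q * W)ᵀ * A := by
    rw [Matrix.transpose_mul, ← Matrix.mul_assoc (Q * W) Wᵀ Qᵀ, Matrix.mul_assoc Q W Wᵀ, hWW,
      Matrix.mul_one, hQQ]
  exact final
end

section
/- Let A be a real m×n matrix, G a real n×n matrix, q a non-negative integer, and ℓ a positive integer with ℓ ≤ n. Suppose (AᵀA)^q G = V S where V is an n×n orthogonal matrix and S is n×n upper triangular, and A V = U R where U is an m×m orthogonal matrix and R is m×n upper trapezoidal (R(i,j)=0 for i>j). Then (AAᵀ)^q A G(:,1:ℓ) = U(:,1:ℓ) · R(1:ℓ,1:ℓ) · S(1:ℓ,1:ℓ). -/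
open Matrix

lemma sum_castLE_of_zero {N L : ℕ} (h : L ≤ N) (f : Fin N → ℝ)
    (hf : ∀ k : Fin N, L ≤ (k : ℕ) → f k = 0) :
    ∑ k : Fin N, f k = ∑ k : Fin L, f (Fin.castLE h k) := by
  rw [show (∑ k : Fin L, f (Fin.castLE h k)) = ∑ k ∈ Finset.univ.map (Fin.castLEEmb h), f k from (Finset.sum_map Finset.univ (Fin.castLEEmb h) f).symm]
  symm
  apply Finset.sum_subset (Finset.subset_univ _)
  intro k _ hk
  apply hf
  by_contra hlt
  push_neg at hlt
  exact hk (Finset.mem_map.2 ⟨⟨(k : ℕ), hlt⟩, Finset.mem_univ _, rfl⟩)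

/-- Key intermediate identity in the powerURV–RSVD equivalence: if
(AᵀA)^q G = V S with V orthogonal and S upper triangular, and A V = U R with U
orthogonal and R upper trapezoidal, then
(AAᵀ)^q A G(:,1:ℓ) = U(:,1:ℓ) R(1:ℓ,1:ℓ) S(1:ℓ,1:ℓ). -/
theorem powerURV_rsvd_key_identity
    {m n : ℕ} (A : Matrix (Fin m) (Fin n) ℝ) (G : Matrix (Fin n) (Fin n) ℝ)
    (q ℓ : ℕ) (hℓ0 : 0 < ℓ) (hℓn : ℓ ≤ n) (hℓm : ℓ ≤ m)
    (V S : Matrix (Fin n) (Fin n) ℝ)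
    (hV : Vᵀ * V = 1)
    (hS : ∀ i j : Fin n, (j : ℕ) < (i : ℕ) → S i j = 0)
    (h1 : (Aᵀ * A) ^ q * G = V * S)
    (U : Matrix (Fin m) (Fin m) ℝ) (R : Matrix (Fin m) (Fin n) ℝ)
    (hU : Uᵀ * U = 1)
    (hR : ∀ (i : Fin m) (j : Fin n), (j : ℕ) < (i : ℕ) → R i j = 0)
    (h2 : A * V = U * R) :
    (A * Aᵀ) ^ q * A * G.submatrix id (Fin.castLE hℓn)
      = U.submatrix id (Fin.castLE hℓm)
        * R.submatrix (Fin.castLE hℓm) (Fin.castLE hℓn)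
        * S.submatrix (Fin.castLE hℓn) (Fin.castLE hℓn) := by
  have hcomm : ∀ p : ℕ, (A * Aᵀ) ^ p * A = A * (Aᵀ * A) ^ p := by
    intro p
    induction p with
    | zero => simp
    | succ k ih =>
      rw [pow_succ, pow_succ]
      calc (A * Aᵀ) ^ k * (A * Aᵀ) * A = (A * Aᵀ) ^ k * A * (Aᵀ * A) := by
            rw [Matrix.mul_assoc, Matrix.mul_assoc, Matrix.mul_assoc]
        _ = A * (Aᵀ * A) ^ k * (Aᵀ * A) := by rw [ih]
        _ = A * ((Aᵀ * A) ^ k * (Aᵀ * A)) := by rw [Matrix.mul_assoc]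
  have key : (A * Aᵀ) ^ q * A * G = U * R * S := by
    rw [hcomm, Matrix.mul_assoc, h1, ← Matrix.mul_assoc, h2]
  ext t j
  have hLHS : ((A * Aᵀ) ^ q * A * G.submatrix id (Fin.castLE hℓn)) t j
      = (U * R * S) t (Fin.castLE hℓn j) := by
    rw [← key]
    simp [mul_apply, submatrix_apply]
  rw [hLHS]
  have e1 : (U * R * S) t (Fin.castLE hℓn j)
      = ∑ i : Fin m, ∑ k : Fin n, U t i * R i k * S k (Fin.castLE hℓn j) := by
    rw [Matrix.mul_assoc]
    simp only [mul_apply, Finset.mul_sum, mul_assoc]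
  rw [e1]
  have e2 : ∑ i : Fin m, ∑ k : Fin n, U t i * R i k * S k (Fin.castLE hℓn j)
      = ∑ i : Fin ℓ, ∑ k : Fin ℓ, U t (Fin.castLE hℓm i)
          * R (Fin.castLE hℓm i) (Fin.castLE hℓn k)
          * S (Fin.castLE hℓn k) (Fin.castLE hℓn j) := by
    rw [sum_castLE_of_zero hℓm]
    · apply Finset.sum_congr rfl
      intro i _
      apply sum_castLE_of_zero hℓn
      intro k hk
      have : S k (Fin.castLE hℓn j) = 0 := hS _ _ (lt_of_lt_of_le j.isLt hk)
      simp [this]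
    · intro i hi
      apply Finset.sum_eq_zero
      intro k _
      rcases lt_or_ge (k : ℕ) (i : ℕ) with h | h
      · simp [hR i k h]
      · have : S k (Fin.castLE hℓn j) = 0 :=
          hS _ _ (lt_of_lt_of_le j.isLt (le_trans hi h))
        simp [this]
  rw [e2]
  rw [Finset.sum_comm]
  simp only [mul_apply, submatrix_apply, id, Finset.sum_mul, mul_assoc]
end

section
/- Let A be a fixed real m×n matrix with rank(A) = k, and let G be a random real n×n matrix whose entries are independent standard Gaussian random variables. Then, with probability 1, the following holds: G is invertible, and for every factorization G = Q R with Q an n×n orthogonal matrix and R an n×n upper triangular matrix, the matrix B = A·Q has rank k and the submatrix B(:,1:k) of its first k columns has rank k (i.e., the first k columns of B are linearly independent). -/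
/-!
The zero set of a nonzero real polynomial is null for any product of atomless measures on `ℝ`
(induction on the number of variables: a.e. the leading coefficient in the last variable does
not vanish, and then only finitely many values of that variable are roots). Both `det G` and
the Gram determinant `det (Nᵀ N)` of `N = A · G(:,1:k)` are polynomials in the entries of `G`;
the first is nonzero at `G = 1`, the second at a `G` whose first `k` columns are preimages
under `A` of a basis of its column space. So almost surely `G` is invertible and `A · G(:,1:k)`
has rank `k`. Finally, if `G = Q R` with `R` upper triangular, then
`G(:,1:k) = Q(:,1:k) R(1:k,1:k)` and `R(1:k,1:k)` is invertible, so
`(A Q)(:,1:k)` has the same rank as `A · G(:,1:k)`.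
-/

open Matrix MeasureTheory ProbabilityTheory

theorem Polynomial.ae_eval_ne_zero (μ : Measure ℝ) [NullSingletonClass μ] {q : Polynomial ℝ}
    (hq : q ≠ 0) : ∀ᵐ y ∂μ, q.eval y ≠ 0 :=
  measure_eq_zero_iff_ae_notMem.1 ((Polynomial.finite_setOfPred_isRoot hq).measure_zero μ)

namespace MvPolynomial

section

variable (μ : Measure ℝ) [SigmaFinite μ] [NullSingletonClass μ]

theorem ae_eval_ne_zero_fin {N : ℕ} (p : MvPolynomial (Fin N) ℝ) (hp : p ≠ 0) :
    ∀ᵐ x ∂Measure.pi fun _ => μ, eval x p ≠ 0 := by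
  induction N with
  | zero =>
    obtain ⟨c, rfl⟩ := C_surjective (Fin 0) p
    exact ae_of_all _ fun x => by simpa using hp
  | succ N ih =>
    let e := MeasurableEquiv.piFinSuccAbove (fun _ : Fin (N + 1) => ℝ) 0
    have hmp := measurePreserving_piFinSuccAbove (fun _ : Fin (N + 1) => μ) 0
    have hmeas : MeasurableSet {z | eval (e.symm z) p ≠ 0} :=
      ((continuous_eval p).measurable.comp e.symm.measurable) (measurableSet_singleton 0).compl
    rw [← hmp.symm.map_eq, e.symm.measurableEmbedding.ae_map_iff,
      Measure.ae_prod_iff_ae_ae hmeas, Measure.ae_ae_comm hmeas]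
    set P := finSuccEquiv ℝ N p
    have hP : P ≠ 0 := (map_ne_zero_iff _ (finSuccEquiv ℝ N).injective).2 hp
    filter_upwards [ih _ (Polynomial.leadingCoeff_ne_zero.2 hP)] with x hx
    have hPx : P.map (eval x) ≠ 0 := fun h => hx <| by
      simpa [Polynomial.coeff_map] using congrArg (Polynomial.coeff · P.natDegree) h
    filter_upwards [Polynomial.ae_eval_ne_zero μ hPx] with y hy
    have hcons : e.symm (y, x) = Fin.cons y x := by
      simp [e, MeasurableEquiv.piFinSuccAbove, Fin.insertNthEquiv, Fin.insertNth_zero']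
    rwa [hcons, eval_eq_eval_mv_eval']

theorem ae_eval_ne_zero {ι : Type*} [Fintype ι] (p : MvPolynomial ι ℝ) (hp : p ≠ 0) :
    ∀ᵐ x ∂Measure.pi fun _ : ι => μ, eval x p ≠ 0 := by
  let e := Fintype.equivFin ι
  have hmp := measurePreserving_piCongrLeft (fun _ : ι => μ) e.symm
  have hrename : rename e p ≠ 0 := (rename_injective _ e.injective).ne_iff' (map_zero _) |>.2 hp
  rw [← hmp.map_eq, (MeasurableEquiv.piCongrLeft _ e.symm).measurableEmbedding.ae_map_iff]
  filter_upwards [ae_eval_ne_zero_fin μ _ hrename] with x hx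
  have hcomp : MeasurableEquiv.piCongrLeft (fun _ => ℝ) e.symm x = x ∘ e := by
    funext i
    simpa using MeasurableEquiv.piCongrLeft_apply_apply (β := fun _ => ℝ) e.symm x (e i)
  rwa [hcomp, ← eval_rename]

end

theorem ae_eval_uncurry_ne_zero {m n : Type*} [Fintype m] [Fintype n] (μ : Measure ℝ)
    [IsProbabilityMeasure μ] [NullSingletonClass μ] (p : MvPolynomial (m × n) ℝ)
    (hp : p ≠ 0) :
    ∀ᵐ g ∂Measure.pi fun _ : m => Measure.pi fun _ : n => μ,
      eval (fun q => g q.1 q.2) p ≠ 0 := by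
  have hcurry : (Measure.pi fun _ : m × n => μ).map (MeasurableEquiv.curry m n ℝ) =
      Measure.pi fun _ : m => Measure.pi fun _ : n => μ := by
    simp only [← Measure.infinitePi_eq_pi]
    exact Measure.infinitePi_map_curry fun _ _ => μ
  rw [← hcurry, (MeasurableEquiv.curry m n ℝ).measurableEmbedding.ae_map_iff]
  exact ae_eval_ne_zero μ p hp

end MvPolynomial

namespace Matrix

theorem det_ne_zero_of_rank_eq_card {K κ : Type*} [Field K] [Fintype κ] [DecidableEq κ]
    {S : Matrix κ κ K} (h : S.rank = Fintype.card κ) : S.det ≠ 0 := by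
  have hrange : LinearMap.range S.mulVecLin = ⊤ :=
    Submodule.eq_top_of_finrank_eq (by rw [Module.finrank_fintype_fun_eq_card]; exact h)
  exact ((isUnit_iff_isUnit_det S).1
    (mulVec_surjective_iff_isUnit.1 (LinearMap.range_eq_top.1 hrange))).ne_zero

theorem det_transpose_mul_self_ne_zero_iff {K l κ : Type*} [Field K] [LinearOrder K]
    [IsStrictOrderedRing K] [Fintype l] [Fintype κ] [DecidableEq κ] (N : Matrix l κ K) :
    (Nᵀ * N).det ≠ 0 ↔ N.rank = Fintype.card κ := by
  rw [← rank_transpose_mul_self N]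
  exact ⟨fun h => by simpa using rank_of_det_ne_zero h, det_ne_zero_of_rank_eq_card⟩

theorem exists_rank_mul_eq {K l n : Type*} [Field K] [Fintype l] [Fintype n]
    (A : Matrix l n K) {k : ℕ} (hk : k ≤ A.rank) :
    ∃ W : Matrix n (Fin k) K, (A * W).rank = k := by
  let b := Module.finBasisOfFinrankEq K (LinearMap.range A.mulVecLin) rfl
  choose u hu using fun i : Fin k => LinearMap.mem_range.1 (b (Fin.castLE hk i)).2
  refine ⟨(of u)ᵀ, ?_⟩
  have hrows : (A * (of u)ᵀ)ᵀ = of fun i => A *ᵥ u i := by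
    ext i j
    simp [mul_apply, mulVec, dotProduct]
  have hind : LinearIndependent K fun i => A *ᵥ u i := by
    have hb : (fun i => A *ᵥ u i) = Submodule.subtype _ ∘ b ∘ Fin.castLE hk := funext hu
    rw [hb]
    exact (b.linearIndependent.comp _ (Fin.castLE_injective hk)).map' _ (Submodule.ker_subtype _)
  rw [← rank_transpose, hrows]
  exact hind.rank_matrix.trans (Fintype.card_fin k)

theorem submatrix_castLE_mul_of_isUpperTriangular {α l : Type*} [CommSemiring α] {n k : ℕ}
    (Q : Matrix l (Fin n) α) {R : Matrix (Fin n) (Fin n) α} (hR : R.IsUpperTriangular)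
    (h : k ≤ n) :
    (Q * R).submatrix id (Fin.castLE h) =
      Q.submatrix id (Fin.castLE h) * R.submatrix (Fin.castLE h) (Fin.castLE h) := by
  ext i j
  refine (Fintype.sum_of_injective _ (Fin.castLE_injective h) _ _ ?_ fun _ => rfl).symm
  rintro r hr
  have hjr : Fin.castLE h j < r := by
    by_contra! hrj
    exact hr ⟨⟨r, lt_of_le_of_lt (Fin.le_def.1 hrj) j.isLt⟩, rfl⟩
  exact mul_eq_zero_of_right _ (hR hjr)

theorem rank_submatrix_castLE_mul_of_isUpperTriangular {K l : Type*} [CommRing K] [IsDomain K]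
    {n k : ℕ} (B : Matrix l (Fin n) K) {R : Matrix (Fin n) (Fin n) K} (hR : R.IsUpperTriangular)
    (hdet : R.det ≠ 0) (h : k ≤ n) :
    ((B * R).submatrix id (Fin.castLE h)).rank = (B.submatrix id (Fin.castLE h)).rank := by
  have hdiag : ∀ i, R i i ≠ 0 := by
    simpa [det_of_isUpperTriangular hR, Finset.prod_ne_zero_iff] using hdet
  have hR₁ : (R.submatrix (Fin.castLE h) (Fin.castLE h)).IsUpperTriangular :=
    fun _ _ hij => hR hij
  rw [submatrix_castLE_mul_of_isUpperTriangular B hR h, rank_mul_eq_left_of_det_ne_zero]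
  simpa [det_of_isUpperTriangular hR₁, Finset.prod_ne_zero_iff] using fun i => hdiag _

section

variable (μ : Measure ℝ) [IsProbabilityMeasure μ] [NullSingletonClass μ]

theorem ae_det_ne_zero {n : Type*} [Fintype n] [DecidableEq n] :
    ∀ᵐ g ∂Measure.pi fun _ : n => Measure.pi fun _ : n => μ, (of g).det ≠ 0 := by
  filter_upwards [MvPolynomial.ae_eval_uncurry_ne_zero μ _ (det_mvPolynomialX_ne_zero n ℝ)]
    with g hg
  rwa [eval_det_mvPolynomialX] at hg

open MvPolynomial in
theorem ae_rank_mul_submatrix_castLE {l : Type*} [Fintype l] {n k : ℕ}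
    (A : Matrix l (Fin n) ℝ) (hk : k ≤ A.rank) (h : k ≤ n) :
    ∀ᵐ g ∂Measure.pi fun _ : Fin n => Measure.pi fun _ : Fin n => μ,
      (A * (of g).submatrix id (Fin.castLE h)).rank = k := by
  let N := A.map (C : ℝ →+* MvPolynomial (Fin n × Fin n) ℝ) *
    (mvPolynomialX (Fin n) (Fin n) ℝ).submatrix id (Fin.castLE h)
  have hN (g : Fin n → Fin n → ℝ) :
      N.map (eval fun q => g q.1 q.2) = A * (of g).submatrix id (Fin.castLE h) := by
    rw [Matrix.map_mul]
    congr 1 <;> ext <;> simp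
  have heval (g : Fin n → Fin n → ℝ) :
      eval (fun q => g q.1 q.2) (Nᵀ * N).det =
        ((A * (of g).submatrix id (Fin.castLE h))ᵀ *
          (A * (of g).submatrix id (Fin.castLE h))).det := by
    rw [RingHom.map_det, RingHom.mapMatrix_apply, Matrix.map_mul, transpose_map, hN]
  obtain ⟨W, hW⟩ := exists_rank_mul_eq A hk
  let g₀ : Fin n → Fin n → ℝ := fun i j => if hj : (j : ℕ) < k then W i ⟨j, hj⟩ else 0
  have hg₀ : (of g₀).submatrix id (Fin.castLE h) = W := by ext; simp [g₀]
  have hgram : (Nᵀ * N).det ≠ 0 := by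
    intro h0
    have h₀ := heval g₀
    rw [h0, map_zero, hg₀, eq_comm] at h₀
    exact (det_transpose_mul_self_ne_zero_iff (A * W)).2 (by rw [hW, Fintype.card_fin]) h₀
  filter_upwards [ae_eval_uncurry_ne_zero μ _ hgram] with g hg
  rwa [heval, det_transpose_mul_self_ne_zero_iff, Fintype.card_fin] at hg

end

end Matrix

/-- If A is a fixed real m×n matrix of rank k and G is a standard Gaussian n×n matrix,
then with probability 1: G is invertible, and for every QR factorization G = QR with Q
orthogonal and R upper triangular, the matrix B = A·Q has rank k and its first k
columns are linearly independent. -/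
theorem gaussian_qr_sample_matrix_rank
    {m n : ℕ} (A : Matrix (Fin m) (Fin n) ℝ) (k : ℕ) (hA : A.rank = k) :
    ∀ᵐ g ∂(Measure.pi fun _ : Fin n => Measure.pi fun _ : Fin n => gaussianReal 0 1),
      IsUnit (Matrix.of g) ∧
      ∀ Q R : Matrix (Fin n) (Fin n) ℝ, Qᵀ * Q = 1 →
        (∀ i j : Fin n, (j : ℕ) < (i : ℕ) → R i j = 0) →
        Matrix.of g = Q * R →
        (A * Q).rank = k ∧
        ((A * Q).submatrix id
            (Fin.castLE (show k ≤ n by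
              rw [← hA]; simpa using A.rank_le_card_width))).rank = k := by
  have hkn : k ≤ n := hA ▸ A.rank_le_width
  have := nullSingletonClass_gaussianReal (μ := 0) one_ne_zero
  filter_upwards [ae_det_ne_zero (gaussianReal 0 1),
    ae_rank_mul_submatrix_castLE (gaussianReal 0 1) A hA.ge hkn] with g hdet hrank
  refine ⟨(isUnit_iff_isUnit_det _).2 hdet.isUnit, fun Q R hQ hR hQR => ⟨?_, ?_⟩⟩
  · rw [rank_mul_eq_left_of_isUnit_det Q A (isUnit_det_of_left_inverse hQ), hA]
  · have hRdet : R.det ≠ 0 := right_ne_zero_of_mul (det_mul Q R ▸ hQR ▸ hdet)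
    rwa [← rank_submatrix_castLE_mul_of_isUpperTriangular _ (fun i j hij => hR i j hij) hRdet,
      Matrix.mul_assoc, ← hQR]
end

section
/- Let A be a real m×n matrix and let Q be a real m×ℓ matrix with orthonormal columns (QᵀQ = I) such that the column space of Q is contained in the column space of A. Then rank(Qᵀ A) = ℓ; equivalently, all ℓ singular values of Qᵀ A are positive. -/
open Matrix

namespace Matrix

variable {R : Type*} {l m n : Type*} [Fintype m] [Fintype n]

theorem range_mulVecLin_mul_eq_top_of_range_le [CommSemiring R] [Fintype l] [DecidableEq l]
    {B : Matrix l m R} {Q : Matrix m l R} {A : Matrix m n R} (hBQ : B * Q = 1)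
    (hQA : LinearMap.range Q.mulVecLin ≤ LinearMap.range A.mulVecLin) :
    LinearMap.range (B * A).mulVecLin = ⊤ := by
  refine top_unique ?_
  calc ⊤ = LinearMap.range (B * Q).mulVecLin := by simp [hBQ]
    _ = (LinearMap.range Q.mulVecLin).map B.mulVecLin := by
      rw [mulVecLin_mul, LinearMap.range_comp]
    _ ≤ (LinearMap.range A.mulVecLin).map B.mulVecLin := Submodule.map_mono hQA
    _ = LinearMap.range (B * A).mulVecLin := by
      rw [mulVecLin_mul, LinearMap.range_comp]

theorem rank_eq_card_height_of_range_eq_top [CommSemiring R] [StrongRankCondition R]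
    {M : Matrix m n R} (hM : LinearMap.range M.mulVecLin = ⊤) :
    M.rank = Fintype.card m := by
  rw [rank, hM, finrank_top, Module.finrank_fintype_fun_eq_card]

end Matrix

/-- If Q has orthonormal columns and Col(Q) ⊆ Col(A), then QᵀA has full row rank ℓ. -/
theorem rank_transpose_mul_of_colspace_le
    {m n ℓ : ℕ} (A : Matrix (Fin m) (Fin n) ℝ) (Q : Matrix (Fin m) (Fin ℓ) ℝ)
    (hQ : Qᵀ * Q = 1)
    (hcol : LinearMap.range Q.mulVecLin ≤ LinearMap.range A.mulVecLin) :
    (Qᵀ * A).rank = ℓ := by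
  rw [rank_eq_card_height_of_range_eq_top (range_mulVecLin_mul_eq_top_of_range_le hQ hcol),
    Fintype.card_fin]
end
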